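/- arXiv:1208.0120 — 2 statements merged into one kernel-verified Lean document; each statement's English description precedes it below -/
import Mathlib

section
/- Let M be a unital C*-algebra, let A be a C*-subalgebra of M containing the unit of M, and let ρ : A → M be a unital *-homomorphism. Suppose that for every finite subset F of A and every ε > 0 there exists an isometry v ∈ M (v*v = 1) such that ‖ρ(a) − v*av‖ < ε for all a ∈ F. Then for every finite subset F of A and every ε > 0 there exists an isometry v ∈ M such that ‖vρ(a) − av‖ < ε for all a ∈ F. -/
/-!
For an isometry `v` and `x = v s - b v` one has the identity
`x* x = s* e + e* s - f` with `e = s - v* b v` and `f = s* s - v* (b* b) v`,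
so the C*-identity gives `‖x‖² ≤ 2 ‖s‖ ‖e‖ + ‖f‖`. Taking `s = ρ a`, `b = a`, and using that
`ρ` is multiplicative and `*`-preserving, `f = ρ (a* a) - v* (a* a) v`; so it suffices to make
`v* · v` approximate `ρ` on `F` together with `{a* a | a ∈ F}`.
-/

theorem star_mul_self_mul_sub_mul_eq {R : Type*} [Ring R] [StarRing R] {v : R}
    (hv : star v * v = 1) (s b : R) :
    star (v * s - b * v) * (v * s - b * v) =
      star s * (s - star v * b * v) + star (s - star v * b * v) * s
        - (star s * s - star v * (star b * b) * v) := by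
  have hv' : star s * (star v * v) * s = star s * s := by rw [hv, mul_one]
  simp only [star_sub, star_mul, star_star]
  linear_combination (norm := noncomm_ring) hv'

theorem norm_mul_sub_mul_sq_le {E : Type*} [NormedRing E] [StarRing E] [CStarRing E] {v : E}
    (hv : star v * v = 1) (s b : E) :
    ‖v * s - b * v‖ ^ 2 ≤
      2 * ‖s‖ * ‖s - star v * b * v‖ + ‖star s * s - star v * (star b * b) * v‖ := by
  set e := s - star v * b * v
  set f := star s * s - star v * (star b * b) * v
  calc ‖v * s - b * v‖ ^ 2 = ‖star s * e + star e * s - f‖ := by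
        rw [sq, ← CStarRing.norm_star_mul_self, star_mul_self_mul_sub_mul_eq hv]
    _ ≤ ‖star s * e‖ + ‖star e * s‖ + ‖f‖ :=
        (norm_sub_le _ _).trans (add_le_add_left (norm_add_le _ _) _)
    _ ≤ ‖s‖ * ‖e‖ + ‖e‖ * ‖s‖ + ‖f‖ := by
        gcongr <;> exact (norm_mul_le _ _).trans_eq (by rw [norm_star])
    _ = 2 * ‖s‖ * ‖e‖ + ‖f‖ := by ring

theorem stmt2_general {M : Type*} [CStarAlgebra M]
    (A : StarSubalgebra ℂ M)
    (ρ : A →⋆ₐ[ℂ] M)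
    (hyp : ∀ (F : Finset A) (ε : ℝ), 0 < ε →
      ∃ v : M, star v * v = 1 ∧ ∀ a ∈ F, ‖ρ a - star v * (a : M) * v‖ < ε) :
    ∀ (F : Finset A) (ε : ℝ), 0 < ε →
      ∃ v : M, star v * v = 1 ∧ ∀ a ∈ F, ‖v * ρ a - (a : M) * v‖ < ε := by
  classical
  intro F ε hε
  set C := ∑ a ∈ F, ‖ρ a‖
  obtain ⟨δ, hδ, hδε⟩ := exists_pos_mul_lt (pow_pos hε 2) (2 * C + 1)
  obtain ⟨v, hv, hvF⟩ := hyp (F ∪ F.image fun a => star a * a) δ hδ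
  refine ⟨v, hv, fun a ha => ?_⟩
  have he : ‖ρ a - star v * (a : M) * v‖ < δ := hvF a (Finset.mem_union_left _ ha)
  have hf : ‖star (ρ a) * ρ a - star v * (star (a : M) * a) * v‖ < δ := by
    simpa [map_star] using
      hvF (star a * a) (Finset.mem_union_right _ (Finset.mem_image_of_mem _ ha))
  have hC : ‖ρ a‖ ≤ C :=
    Finset.single_le_sum (f := fun a => ‖ρ a‖) (fun _ _ => norm_nonneg _) ha
  refine lt_of_pow_lt_pow_left₀ 2 hε.le ((norm_mul_sub_mul_sq_le hv _ _).trans_lt ?_)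
  have hCe : ‖ρ a‖ * ‖ρ a - star v * (a : M) * v‖ ≤ C * δ :=
    mul_le_mul hC he.le (norm_nonneg _) (hC.trans' (norm_nonneg _))
  calc 2 * ‖ρ a‖ * ‖ρ a - star v * (a : M) * v‖ + _ < 2 * C * δ + δ := by linarith
    _ = (2 * C + 1) * δ := by ring
    _ < ε ^ 2 := hδε

/-- Let `M` be a unital C*-algebra, `A` a C*-subalgebra of `M`
containing the unit of `M`, and `ρ : A → M` a unital *-homomorphism.  Suppose that
for every finite subset `F ⊆ A` and every `ε > 0` there exists an isometry `v ∈ M`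
with `‖ρ(a) − v*av‖ < ε` for all `a ∈ F`.  Then for every finite subset `F ⊆ A` and
every `ε > 0` there exists an isometry `v ∈ M` with `‖vρ(a) − av‖ < ε` for all `a ∈ F`. -/
theorem stmt2 {M : Type*} [CStarAlgebra M]
    (A : StarSubalgebra ℂ M) (hA : IsClosed (A : Set M))
    (ρ : A →⋆ₐ[ℂ] M)
    (hyp : ∀ (F : Finset A) (ε : ℝ), 0 < ε →
      ∃ v : M, star v * v = 1 ∧ ∀ a ∈ F, ‖ρ a - star v * (a : M) * v‖ < ε) :
    ∀ (F : Finset A) (ε : ℝ), 0 < ε →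
      ∃ v : M, star v * v = 1 ∧ ∀ a ∈ F, ‖v * ρ a - (a : M) * v‖ < ε :=
  stmt2_general A ρ hyp
end

section
/- Let H be a complex Hilbert space, let q ∈ B(H) be an orthogonal projection, and let (j_n)_{n≥1} be a sequence in B(H) with j_1 = j_1* = q, j_n* j_n = q for all n, j_m* j_n = 0 for m ≠ n, and such that for every ξ ∈ H the family (j_n j_n* ξ) is summable with sum ξ; let T ∈ B(H) be the operator determined by Tξ = Σ_n j_n (j_{n+1}* ξ). Let x ∈ B(H) satisfy x = q x q. Then there exists y ∈ B(H) such that for every ξ ∈ H the family (j_n (x (j_n* ξ)))_{n≥1} is summable with sum yξ, and moreover ‖y‖ ≤ ‖x‖, q y = y q = x, and T* y = y T*. -/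
open ContinuousLinearMap

/-! The `jₙ` are partial isometries with initial projection `q` whose ranges are pairwise
orthogonal and resolve the identity. The summands `jₙ x jₙ* ξ` therefore lie in orthogonal
subspaces and have norm at most `‖x‖ ‖jₙ* ξ‖`, while `Σ ‖jₙ* ξ‖² = ‖ξ‖²`; this gives the
summability and `‖y‖ ≤ ‖x‖`. An operator is determined by its products with the `jₙ`, and on
them everything is explicit: `y jₙ = jₙ x`, `q jₙ = δ₀ₙ q` and `T* jₙ = jₙ₊₁ q`. -/

theorem OrthogonalFamily.hasSum_norm_sq {ι 𝕜 E : Type*} [RCLike 𝕜] [NormedAddCommGroup E]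
    [InnerProductSpace 𝕜 E] {G : ι → Type*} [∀ i, NormedAddCommGroup (G i)]
    [∀ i, InnerProductSpace 𝕜 (G i)] {V : ∀ i, G i →ₗᵢ[𝕜] E} (hV : OrthogonalFamily 𝕜 G V)
    {f : ∀ i, G i} {a : E} (h : HasSum (fun i => V i (f i)) a) :
    HasSum (fun i => ‖f i‖ ^ 2) (‖a‖ ^ 2) := by
  simpa only [HasSum, hV.norm_sum] using h.norm.pow 2

theorem ContinuousLinearMap.exists_hasSum_apply_of_norm_tsum_le {ι 𝕜 E F : Type*}
    [NontriviallyNormedField 𝕜] [NormedAddCommGroup E] [NormedSpace 𝕜 E]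
    [NormedAddCommGroup F] [NormedSpace 𝕜 F] (f : ι → E →L[𝕜] F)
    (hf : ∀ ξ, Summable fun i => f i ξ) {C : ℝ} (hC : 0 ≤ C)
    (hbound : ∀ ξ, ‖∑' i, f i ξ‖ ≤ C * ‖ξ‖) :
    ∃ y : E →L[𝕜] F, (∀ ξ, HasSum (fun i => f i ξ) (y ξ)) ∧ ‖y‖ ≤ C := by
  let Y : E →ₗ[𝕜] F :=
    { toFun := fun ξ => ∑' i, f i ξ
      map_add' := fun ξ η => by simp only [map_add, (hf ξ).tsum_add (hf η)]
      map_smul' := fun c ξ => by simp only [map_smul, RingHom.id_apply, tsum_const_smul'' c] }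
  exact ⟨Y.mkContinuous C hbound, fun ξ => (hf ξ).hasSum,
    LinearMap.mkContinuous_norm_le Y hC hbound⟩

theorem norm_le_one_of_star_mul_self_eq {A : Type*} [NonUnitalNormedRing A] [StarRing A]
    [CStarRing A] {p a : A} (hp : IsStarProjection p) (ha : star a * a = p) : ‖a‖ ≤ 1 := by
  have : ‖a‖ * ‖a‖ ≤ 1 := by rw [← CStarRing.norm_star_mul_self, ha]; exact hp.norm_le _
  nlinarith [norm_nonneg a]

section PartialIsometries

variable {H : Type*} [NormedAddCommGroup H] [InnerProductSpace ℂ H] [CompleteSpace H]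
  {q : H →L[ℂ] H} {j : ℕ → H →L[ℂ] H}

theorem star_mul_eq_ite (hjq : ∀ n, star (j n) * j n = q)
    (hjorth : ∀ m n, m ≠ n → star (j m) * j n = 0) (m n : ℕ) :
    star (j m) * j n = if m = n then q else 0 := by
  split_ifs with h
  · rw [h, hjq]
  · exact hjorth m n h

theorem star_apply_apply_eq_ite (hjq : ∀ n, star (j n) * j n = q)
    (hjorth : ∀ m n, m ≠ n → star (j m) * j n = 0) (m n : ℕ) (v : H) :
    star (j m) (j n v) = if m = n then q v else 0 := by
  rw [← mul_apply_eq_comp, star_mul_eq_ite hjq hjorth]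
  split_ifs <;> rfl

theorem orthogonalFamily_range (hjorth : ∀ m n, m ≠ n → star (j m) * j n = 0) :
    OrthogonalFamily ℂ (fun n => LinearMap.range (j n : H →ₗ[ℂ] H))
      fun n => (LinearMap.range (j n : H →ₗ[ℂ] H)).subtypeₗᵢ := by
  rintro m n hmn ⟨_, u, rfl⟩ ⟨_, v, rfl⟩
  change inner ℂ (j m u) (j n v) = 0
  rw [← adjoint_inner_right, ← star_eq_adjoint, ← mul_apply_eq_comp, hjorth m n hmn, zero_apply,
    inner_zero_right]

theorem hasSum_norm_star_apply_sq (hjsum : ∀ ξ : H, HasSum (fun n => j n (star (j n) ξ)) ξ)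
    (ξ : H) : HasSum (fun n => ‖star (j n) ξ‖ ^ 2) (‖ξ‖ ^ 2) := by
  convert (Complex.reCLM.comp ((innerSL ℂ ξ).restrictScalars ℝ)).hasSum (hjsum ξ) using 1
  · ext n
    rw [comp_apply, coe_restrictScalars', innerSL_apply_apply, star_eq_adjoint,
      ← adjoint_inner_left, Complex.reCLM_apply, ← RCLike.re_eq_complex_re, inner_self_eq_norm_sq]
  · rw [comp_apply, coe_restrictScalars', innerSL_apply_apply, Complex.reCLM_apply,
      ← RCLike.re_eq_complex_re, inner_self_eq_norm_sq]

theorem exists_hasSum_apply_ampliation (hq : IsStarProjection q)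
    (hjq : ∀ n, star (j n) * j n = q) (hjorth : ∀ m n, m ≠ n → star (j m) * j n = 0)
    (hjsum : ∀ ξ : H, HasSum (fun n => j n (star (j n) ξ)) ξ) (x : H →L[ℂ] H) :
    ∃ y : H →L[ℂ] H, (∀ ξ : H, HasSum (fun n => j n (x (star (j n) ξ))) (y ξ)) ∧ ‖y‖ ≤ ‖x‖ := by
  have hV := orthogonalFamily_range hjorth
  let f (ξ : H) (n : ℕ) : LinearMap.range (j n : H →ₗ[ℂ] H) :=
    ⟨j n (x (star (j n) ξ)), LinearMap.mem_range_self _ _⟩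
  have hf_le (ξ : H) (n : ℕ) : ‖f ξ n‖ ^ 2 ≤ ‖x‖ ^ 2 * ‖star (j n) ξ‖ ^ 2 := by
    rw [← mul_pow]
    refine pow_le_pow_left₀ (norm_nonneg _) ?_ 2
    calc ‖j n (x (star (j n) ξ))‖ ≤ 1 * ‖x (star (j n) ξ)‖ :=
          (j n).le_of_opNorm_le (norm_le_one_of_star_mul_self_eq hq (hjq n)) _
      _ ≤ ‖x‖ * ‖star (j n) ξ‖ := by rw [one_mul]; exact x.le_opNorm _
  have hsummable (ξ : H) : Summable fun n => (f ξ n : H) :=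
    (hV.summable_iff_norm_sq_summable (f ξ)).mpr <|
      .of_nonneg_of_le (fun _ => sq_nonneg _) (hf_le ξ)
        ((hasSum_norm_star_apply_sq hjsum ξ).summable.mul_left _)
  refine exists_hasSum_apply_of_norm_tsum_le (fun n => j n * x * star (j n)) hsummable
    (norm_nonneg x) fun ξ => ?_
  have hsq : ‖∑' n, (f ξ n : H)‖ ^ 2 ≤ (‖x‖ * ‖ξ‖) ^ 2 := by
    rw [mul_pow]
    exact hasSum_le (hf_le ξ) (hV.hasSum_norm_sq (hsummable ξ).hasSum)
      ((hasSum_norm_star_apply_sq hjsum ξ).mul_left _)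
  exact (pow_le_pow_iff_left₀ (norm_nonneg _) (by positivity) two_ne_zero).mp hsq

theorem ampliation_mul_eq (hjq : ∀ n, star (j n) * j n = q)
    (hjorth : ∀ m n, m ≠ n → star (j m) * j n = 0) {x y : H →L[ℂ] H} (hxq : x * q = x)
    (hy : ∀ ξ : H, HasSum (fun n => j n (x (star (j n) ξ))) (y ξ)) (n : ℕ) :
    y * j n = j n * x := by
  ext v
  have hsingle : HasSum (fun m => j m (x (star (j m) (j n v)))) (j n (x (q v))) := by
    simpa [star_apply_apply_eq_ite hjq hjorth] using
      hasSum_single (f := fun m => j m (x (star (j m) (j n v)))) n fun m hm => by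
        simp [star_apply_apply_eq_ite hjq hjorth, hm]
  rw [mul_apply_eq_comp, (hy (j n v)).unique hsingle, mul_apply_eq_comp, ← mul_apply_eq_comp x,
    hxq]

theorem ext_of_mul_eq (hjsum : ∀ ξ : H, HasSum (fun n => j n (star (j n) ξ)) ξ)
    {A B : H →L[ℂ] H} (h : ∀ n, A * j n = B * j n) : A = B := by
  ext ξ
  have hA : HasSum (fun n => (A * j n) (star (j n) ξ)) (A ξ) := A.hasSum (hjsum ξ)
  have hB : HasSum (fun n => (B * j n) (star (j n) ξ)) (B ξ) := B.hasSum (hjsum ξ)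
  simp only [h] at hA
  exact hA.unique hB

theorem star_mul_eq_of_hasSum_shift (hq : IsSelfAdjoint q) (hjq : ∀ n, star (j n) * j n = q)
    (hjorth : ∀ m n, m ≠ n → star (j m) * j n = 0) {T : H →L[ℂ] H}
    (hT : ∀ ξ : H, HasSum (fun n => j n (star (j (n + 1)) ξ)) (T ξ)) (n : ℕ) :
    star T * j n = j (n + 1) * q := by
  suffices star (j n) * T = q * star (j (n + 1)) by
    simpa only [star_mul, star_star, hq.star_eq] using congrArg star this
  ext ξ
  refine ((star (j n)).hasSum (hT ξ)).unique ?_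
  simpa [star_apply_apply_eq_ite hjq hjorth] using
    hasSum_single (f := fun m => star (j n) (j m (star (j (m + 1)) ξ))) n fun m hm => by
      simp [star_apply_apply_eq_ite hjq hjorth, hm.symm]

end PartialIsometries

/-- Let `H` be a complex Hilbert space, `q ∈ B(H)` an orthogonal
projection, and `(jₙ)_{n≥1}` a sequence in `B(H)` (indexed here by `ℕ`, with `j n`
playing the role of `j_{n+1}`) with `j₁ = j₁* = q`, `jₙ* jₙ = q` for all `n`,
`jₘ* jₙ = 0` for `m ≠ n`, and `Σₙ jₙ jₙ* ξ = ξ` for all `ξ ∈ H`; let `T ∈ B(H)` be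
determined by `Tξ = Σₙ jₙ (j_{n+1}* ξ)`.  Let `x ∈ B(H)` satisfy `x = q x q`.  Then
there exists `y ∈ B(H)` (the infinite ampliation `λ^∞(x) = Σₙ jₙ x jₙ*`) such that
`yξ = Σₙ jₙ (x (jₙ* ξ))` for all `ξ`, `‖y‖ ≤ ‖x‖`, `q y = y q = x`, and
`T* y = y T*`. -/
theorem stmt10 {H : Type*} [NormedAddCommGroup H] [InnerProductSpace ℂ H]
    [CompleteSpace H]
    (q : H →L[ℂ] H) (hq_sa : star q = q) (hq_idem : q * q = q)
    (j : ℕ → (H →L[ℂ] H))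
    (hj1 : j 0 = q)
    (hjq : ∀ n, star (j n) * j n = q)
    (hjorth : ∀ m n, m ≠ n → star (j m) * j n = 0)
    (hjsum : ∀ ξ : H, HasSum (fun n => j n (star (j n) ξ)) ξ)
    (T : H →L[ℂ] H)
    (hT : ∀ ξ : H, HasSum (fun n => j n (star (j (n + 1)) ξ)) (T ξ))
    (x : H →L[ℂ] H) (hx : x = q * x * q) :
    ∃ y : H →L[ℂ] H,
      (∀ ξ : H, HasSum (fun n => j n (x (star (j n) ξ))) (y ξ)) ∧
      ‖y‖ ≤ ‖x‖ ∧ q * y = x ∧ y * q = x ∧ star T * y = y * star T := by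
  obtain ⟨y, hy, hy_norm⟩ :=
    exists_hasSum_apply_ampliation ⟨hq_idem, hq_sa⟩ hjq hjorth hjsum x
  have hqx : q * x = x := by rw [hx, ← mul_assoc, ← mul_assoc, hq_idem]
  have hxq : x * q = x := by rw [hx, mul_assoc, hq_idem]
  have hyj := ampliation_mul_eq hjq hjorth hxq hy
  have hTj := star_mul_eq_of_hasSum_shift hq_sa hjq hjorth hT
  have hqj (n : ℕ) : q * j n = if 0 = n then q else 0 := by
    rw [← star_mul_eq_ite hjq hjorth, hj1, hq_sa]
  refine ⟨y, hy, hy_norm, ext_of_mul_eq hjsum fun n => ?_, by rw [← hj1, hyj, hj1, hqx],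
    ext_of_mul_eq hjsum fun n => ?_⟩
  · calc q * y * j n = q * j n * x := by rw [mul_assoc, hyj, mul_assoc]
      _ = x * (q * j n) := by rw [hqj]; split_ifs <;> simp [hqx, hxq]
      _ = x * j n := by rw [← mul_assoc, hxq]
  · calc star T * y * j n = j (n + 1) * x := by
          rw [mul_assoc, hyj, ← mul_assoc, hTj, mul_assoc, hqx]
      _ = y * star T * j n := by rw [mul_assoc, hTj, ← mul_assoc, hyj, mul_assoc, hxq]
end
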